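/- Let q be a prime power, let 𝔽_q be the finite field with q elements, let r ≥ 2 be an integer, and let k ∈ 𝔽_q. Consider the homogeneous polynomial F_{k,r} = x^r(x^q y − x y^q) + y^r(y^q z − y z^q) + (z^r + k x^r)(z^q x − z x^q) ∈ 𝔽_q[x,y,z], which vanishes at every 𝔽_q-point of ℙ². Then the curve C_{k,r} = {F_{k,r} = 0} is smooth at every 𝔽_q-point of ℙ² (i.e., there is no nonzero triple (a,b,c) ∈ 𝔽_q³ at which F_{k,r} and all three partial derivatives ∂F_{k,r}/∂x, ∂F_{k,r}/∂y, ∂F_{k,r}/∂z vanish simultaneously) if and only if the polynomial t^{r²+r+1} + k t^{r+1} − 1 has no zeros in 𝔽_q. -/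
import Mathlib

open MvPolynomial

noncomputable def planeFillingPolyR {F : Type*} [Field F] (q r : ℕ) (k : F) :
    MvPolynomial (Fin 3) F :=
  X 0 ^ r * (X 0 ^ q * X 1 - X 0 * X 1 ^ q)
    + X 1 ^ r * (X 1 ^ q * X 2 - X 1 * X 2 ^ q)
    + (X 2 ^ r + C k * X 0 ^ r) * (X 2 ^ q * X 0 - X 2 * X 0 ^ q)

section eval
variable {F : Type*} [Field F] {q r : ℕ} {k a b c : F}
  (h0 : (q:F) = 0) (ha : a^q = a) (hb : b^q = b) (hc : c^q = c)

include ha hb hc in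
lemma evalF' : eval ![a, b, c] (planeFillingPolyR q r k) = 0 := by
  simp [planeFillingPolyR, ha, hb, hc]

include h0 ha hb hc in
lemma evalD0' : eval ![a, b, c] (pderiv 0 (planeFillingPolyR q r k)) =
    - a^r * b + c^(r+1) + k * a^r * c := by
  simp [planeFillingPolyR, pderiv_mul, pderiv_pow, pderiv_X, h0, ha, hb, hc]; ring

include h0 ha hb hc in
lemma evalD1' : eval ![a, b, c] (pderiv 1 (planeFillingPolyR q r k)) =
    a^(r+1) - b^r * c := by
  simp [planeFillingPolyR, pderiv_mul, pderiv_pow, pderiv_X, h0, ha, hb, hc]; ring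

include h0 ha hb hc in
lemma evalD2' : eval ![a, b, c] (pderiv 2 (planeFillingPolyR q r k)) =
    b^(r+1) - a * c^r - k * a^(r+1) := by
  simp [planeFillingPolyR, pderiv_mul, pderiv_pow, pderiv_X, h0, ha, hb, hc]; ring

end eval

/-- The curve `C_{k,r} = {F_{k,r} = 0}` is smooth at every `𝔽_q`-point of `ℙ²` if and only
if `t^{r²+r+1} + k t^{r+1} − 1` has no zeros in `𝔽_q`. -/
theorem smooth_at_Fq_points_iff_higher_degree {F : Type*} [Field F] [Fintype F]
    (q : ℕ) (hq : Fintype.card F = q) (r : ℕ) (hr : 2 ≤ r) (k : F) :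
    (∀ a b c : F, (a, b, c) ≠ (0, 0, 0) →
        ¬ (eval ![a, b, c] (planeFillingPolyR q r k) = 0 ∧
           eval ![a, b, c] (pderiv 0 (planeFillingPolyR q r k)) = 0 ∧
           eval ![a, b, c] (pderiv 1 (planeFillingPolyR q r k)) = 0 ∧
           eval ![a, b, c] (pderiv 2 (planeFillingPolyR q r k)) = 0)) ↔
      ∀ t : F, t ^ (r ^ 2 + r + 1) + k * t ^ (r + 1) - 1 ≠ 0 := by
  subst hq
  have h0 : ((Fintype.card F : ℕ) : F) = 0 := FiniteField.cast_card_eq_zero F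
  have hp : ∀ x : F, x ^ Fintype.card F = x := FiniteField.pow_card
  have hrne : r ≠ 0 := by omega
  constructor
  · intro H t ht
    apply H t 1 (t ^ (r + 1))
    · intro h
      simp only [Prod.mk.injEq] at h
      exact one_ne_zero h.2.1
    refine ⟨evalF' (hp t) (hp 1) (hp _), ?_, ?_, ?_⟩
    · rw [evalD0' h0 (hp t) (hp 1) (hp _)]
      linear_combination t ^ r * ht
    · rw [evalD1' h0 (hp t) (hp 1) (hp _)]
      simp
    · rw [evalD2' h0 (hp t) (hp 1) (hp _)]
      linear_combination -ht
  · rintro H a b c habc ⟨-, h1, h2, h3⟩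
    rw [evalD0' h0 (hp a) (hp b) (hp c)] at h1
    rw [evalD1' h0 (hp a) (hp b) (hp c)] at h2
    rw [evalD2' h0 (hp a) (hp b) (hp c)] at h3
    have ha0 : a ≠ 0 := by
      rintro rfl
      simp [zero_pow hrne] at h1 h3
      exact habc (by rw [h1, h3])
    have hb0 : b ≠ 0 := by
      rintro rfl
      simp [zero_pow hrne] at h2
      exact ha0 h2
    have e2 : a ^ (r + 1) = b ^ r * c := by linear_combination h2
    have hA : (a ^ (r + 1)) ^ r = (b ^ r * c) ^ r := by rw [e2]
    have key : a ^ (r ^ 2 + r + 1) + k * a ^ (r + 1) * b ^ (r ^ 2)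
        - b ^ (r ^ 2 + r + 1) = 0 := by
      linear_combination a * hA - b ^ (r ^ 2) * h3
    have hbi1 : (b * b⁻¹) ^ (r ^ 2 + r + 1) = 1 := by
      rw [mul_inv_cancel₀ hb0, one_pow]
    have hbi2 : (b * b⁻¹) ^ (r + 1) = 1 := by
      rw [mul_inv_cancel₀ hb0, one_pow]
    refine H (a * b⁻¹) (mul_left_cancel₀ (pow_ne_zero (r ^ 2 + r + 1) hb0) ?_)
    rw [mul_zero]
    linear_combination key + a ^ (r ^ 2 + r + 1) * hbi1 + k * a ^ (r + 1) * b ^ (r ^ 2) * hbi2
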